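/- Let d ≥ 1, x₀ ∈ ℝ^d, T > 0, λ > 0, and let f : ℝ^d → ℝ be any function. Then the infimum over u ∈ L²([0,T]; ℝ^d) of J(u) = f(x₀ + ∫₀^T u(t) dt) + (λ/(2T)) ∫₀^T ‖u(t)‖² dt equals the infimum over y ∈ ℝ^d of f(y) + (λ/(2T²)) ‖y − x₀‖². Moreover, if y* ∈ ℝ^d minimizes y ↦ f(y) + (λ/(2T²)) ‖y − x₀‖², then the constant control u(t) = (y* − x₀)/T attains the left-hand infimum. -/

import Mathlib

open MeasureTheory Real Filter Topology

noncomputable section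

/-- The deterministic finite-horizon control cost
`J(u) = f(x₀ + ∫₀^T u(t) dt) + (λ/(2T)) ∫₀^T ‖u(t)‖² dt`. -/
def ctrlCost (d : ℕ) (x₀ : EuclideanSpace ℝ (Fin d)) (T lam : ℝ)
    (f : EuclideanSpace ℝ (Fin d) → ℝ) (u : ℝ → EuclideanSpace ℝ (Fin d)) : ℝ :=
  f (x₀ + ∫ t in (0:ℝ)..T, u t) + lam / (2 * T) * ∫ t in (0:ℝ)..T, ‖u t‖ ^ 2

/-- The proximal endpoint cost `f(y) + (λ/(2T²)) ‖y − x₀‖²`. -/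
def proxCost (d : ℕ) (x₀ : EuclideanSpace ℝ (Fin d)) (T lam : ℝ)
    (f : EuclideanSpace ℝ (Fin d) → ℝ) (y : EuclideanSpace ℝ (Fin d)) : ℝ :=
  f y + lam / (2 * T ^ 2) * ‖y - x₀‖ ^ 2

/-!
A control `u` only enters the terminal cost through its displacement `y - x₀ = ∫₀^T u`, and by
Cauchy–Schwarz `‖∫₀^T u‖² ≤ T ∫₀^T ‖u‖²`, so `J(u) ≥ proxCost (x₀ + ∫₀^T u)`. Conversely the
constant control `(y - x₀)/T` has displacement `y - x₀` and turns the Cauchy–Schwarz bound into an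
equality, so `J` of it is exactly `proxCost y`.
-/

theorem sq_norm_integral_le_measureReal_mul_integral_sq_norm {α E : Type*} [MeasurableSpace α]
    [NormedAddCommGroup E] [NormedSpace ℝ E] {μ : Measure α} [IsFiniteMeasure μ] {u : α → E}
    (hu : MemLp u 2 μ) :
    ‖∫ a, u a ∂μ‖ ^ 2 ≤ μ.real Set.univ * ∫ a, ‖u a‖ ^ 2 ∂μ := by
  have holder := integral_mul_le_Lp_mul_Lq_of_nonneg HolderConjugate.two_two
    (Eventually.of_forall fun a => norm_nonneg (u a)) (Eventually.of_forall fun _ => zero_le_one)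
    (by simpa using hu.norm) (memLp_const (1 : ℝ))
  have h_norm : ∫ a, ‖u a‖ ∂μ ≤ √(∫ a, ‖u a‖ ^ 2 ∂μ) * √(μ.real Set.univ) := by
    simpa [sqrt_eq_rpow, rpow_two] using holder
  calc ‖∫ a, u a ∂μ‖ ^ 2 ≤ (∫ a, ‖u a‖ ∂μ) ^ 2 :=
        pow_le_pow_left₀ (norm_nonneg _) (norm_integral_le_integral_norm u) 2
    _ ≤ (√(∫ a, ‖u a‖ ^ 2 ∂μ) * √(μ.real Set.univ)) ^ 2 :=
        pow_le_pow_left₀ (integral_nonneg fun a => norm_nonneg _) h_norm 2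
    _ = μ.real Set.univ * ∫ a, ‖u a‖ ^ 2 ∂μ := by
        rw [mul_pow, sq_sqrt (integral_nonneg fun a => by positivity),
          sq_sqrt measureReal_nonneg, mul_comm]

section ControlProblem

variable {d : ℕ} {x₀ : EuclideanSpace ℝ (Fin d)} {T lam : ℝ}
  {f : EuclideanSpace ℝ (Fin d) → ℝ}

theorem ctrlCost_const (hT : 0 < T) (y : EuclideanSpace ℝ (Fin d)) :
    ctrlCost d x₀ T lam f (fun _ => T⁻¹ • (y - x₀)) = proxCost d x₀ T lam f y := by
  have h_disp : ∫ _ in (0:ℝ)..T, T⁻¹ • (y - x₀) = y - x₀ := by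
    rw [intervalIntegral.integral_const, sub_zero, smul_smul, mul_inv_cancel₀ hT.ne', one_smul]
  have h_energy : ∫ _ in (0:ℝ)..T, ‖T⁻¹ • (y - x₀)‖ ^ 2 = T * (T⁻¹ * ‖y - x₀‖) ^ 2 := by
    rw [intervalIntegral.integral_const, sub_zero, norm_smul, norm_inv, norm_of_nonneg hT.le,
      smul_eq_mul]
  rw [ctrlCost, proxCost, h_disp, h_energy, add_sub_cancel]
  field_simp

theorem proxCost_le_ctrlCost (hT : 0 < T) (hlam : 0 ≤ lam) {u : ℝ → EuclideanSpace ℝ (Fin d)}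
    (hu : MemLp u 2 (volume.restrict (Set.Ioc 0 T))) :
    proxCost d x₀ T lam f (x₀ + ∫ t in (0:ℝ)..T, u t) ≤ ctrlCost d x₀ T lam f u := by
  have h_cs := sq_norm_integral_le_measureReal_mul_integral_sq_norm hu
  rw [measureReal_restrict_apply_univ, Real.volume_real_Ioc_of_le hT.le, sub_zero] at h_cs
  rw [proxCost, ctrlCost, add_sub_cancel_left, intervalIntegral.integral_of_le hT.le,
    intervalIntegral.integral_of_le hT.le]
  gcongr f _ + ?_
  calc lam / (2 * T ^ 2) * ‖∫ t in Set.Ioc 0 T, u t‖ ^ 2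
      ≤ lam / (2 * T ^ 2) * (T * ∫ t in Set.Ioc 0 T, ‖u t‖ ^ 2) := by gcongr
    _ = lam / (2 * T) * ∫ t in Set.Ioc 0 T, ‖u t‖ ^ 2 := by field_simp

end ControlProblem

theorem deterministic_warmup_general (d : ℕ)
    (x₀ : EuclideanSpace ℝ (Fin d)) (T lam : ℝ) (hT : 0 < T) (hlam : 0 < lam)
    (f : EuclideanSpace ℝ (Fin d) → ℝ) :
    sInf {v : ℝ | ∃ u : ℝ → EuclideanSpace ℝ (Fin d),
        MemLp u 2 (volume.restrict (Set.Ioc 0 T)) ∧ v = ctrlCost d x₀ T lam f u}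
      = sInf {v : ℝ | ∃ y : EuclideanSpace ℝ (Fin d), v = proxCost d x₀ T lam f y} ∧
    ∀ ystar : EuclideanSpace ℝ (Fin d),
      (∀ y, proxCost d x₀ T lam f ystar ≤ proxCost d x₀ T lam f y) →
      ctrlCost d x₀ T lam f (fun _ => T⁻¹ • (ystar - x₀))
        = sInf {v : ℝ | ∃ u : ℝ → EuclideanSpace ℝ (Fin d),
            MemLp u 2 (volume.restrict (Set.Ioc 0 T)) ∧ v = ctrlCost d x₀ T lam f u} := by
  have h_inf : sInf {v : ℝ | ∃ u : ℝ → EuclideanSpace ℝ (Fin d),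
        MemLp u 2 (volume.restrict (Set.Ioc 0 T)) ∧ v = ctrlCost d x₀ T lam f u}
      = sInf {v : ℝ | ∃ y : EuclideanSpace ℝ (Fin d), v = proxCost d x₀ T lam f y} := by
    refine csInf_eq_csInf_of_forall_exists_le ?_ ?_
    · rintro _ ⟨u, hu, rfl⟩
      exact ⟨_, ⟨_, rfl⟩, proxCost_le_ctrlCost hT hlam.le hu⟩
    · rintro _ ⟨y, rfl⟩
      exact ⟨_, ⟨_, memLp_const _, (ctrlCost_const hT y).symm⟩, le_rfl⟩
  refine ⟨h_inf, fun ystar h_min => ?_⟩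
  have h_least : IsLeast {v : ℝ | ∃ y : EuclideanSpace ℝ (Fin d),
      v = proxCost d x₀ T lam f y} (proxCost d x₀ T lam f ystar) :=
    ⟨⟨ystar, rfl⟩, by rintro _ ⟨y, rfl⟩; exact h_min y⟩
  rw [ctrlCost_const hT, h_inf, h_least.csInf_eq]

theorem deterministic_warmup (d : ℕ) (hd : 1 ≤ d)
    (x₀ : EuclideanSpace ℝ (Fin d)) (T lam : ℝ) (hT : 0 < T) (hlam : 0 < lam)
    (f : EuclideanSpace ℝ (Fin d) → ℝ) :
    sInf {v : ℝ | ∃ u : ℝ → EuclideanSpace ℝ (Fin d),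
        MemLp u 2 (volume.restrict (Set.Ioc 0 T)) ∧ v = ctrlCost d x₀ T lam f u}
      = sInf {v : ℝ | ∃ y : EuclideanSpace ℝ (Fin d), v = proxCost d x₀ T lam f y} ∧
    ∀ ystar : EuclideanSpace ℝ (Fin d),
      (∀ y, proxCost d x₀ T lam f ystar ≤ proxCost d x₀ T lam f y) →
      ctrlCost d x₀ T lam f (fun _ => T⁻¹ • (ystar - x₀))
        = sInf {v : ℝ | ∃ u : ℝ → EuclideanSpace ℝ (Fin d),
            MemLp u 2 (volume.restrict (Set.Ioc 0 T)) ∧ v = ctrlCost d x₀ T lam f u} :=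
  deterministic_warmup_general d x₀ T lam hT hlam f
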